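/- arXiv:0809.2828 — 3 statements merged into one kernel-verified Lean document; each statement's English description precedes it below -/
import Mathlib

section
/- Let s ∈ ℝ, τ > 0, and let R, U : ℝ → ℝ be differentiable with R(η) > 0 for all η. Let P : ℝ → ℝ be differentiable (the traffic pressure law) and Ũ : ℝ → ℝ be any function (the desired speed law), and set c(η)² = P'(R(η)). Define ρ(x,t) = R((x − st)/τ), u(x,t) = U((x − st)/τ), p(x,t) = P(ρ(x,t)). Suppose ρ and u satisfy both ρ_t + (ρu)_x = 0 and u_t + u u_x + p_x/ρ = (Ũ(ρ) − u)/τ for all (x,t). Then at every η with (U(η) − s)² ≠ c(η)² and U(η) ≠ s, the traveling-wave ODE holds: U'(η) = (U(η) − s)(Ũ(R(η)) − U(η)) / ((U(η) − s)² − c(η)²). -/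
/-!
Along the ansatz, `∂ₜ` acts on a profile as `-(s/τ) d/dη` and `∂ₓ` as `(1/τ) d/dη`, so the two
PDEs become `(U - s) R' + R U' = 0` and `(U - s) U' + c² R' / R = Ũ(R) - U`. Eliminating `R'`
between them leaves `((U - s)² - c²) U' = (U - s) (Ũ(R) - U)`.
-/

section TravelingWave

variable {f : ℝ → ℝ} {f' s τ x t ξ : ℝ}

theorem HasDerivAt.travelingWave_time (hξ : (x - s * t) / τ = ξ) (hf : HasDerivAt f f' ξ) :
    HasDerivAt (fun t' => f ((x - s * t') / τ)) (-s / τ * f') t := by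
  have hinner : HasDerivAt (fun t' : ℝ => (x - s * t') / τ) (-s / τ) t := by
    simpa using (((hasDerivAt_id t).const_mul s).const_sub x).div_const τ
  exact (hξ ▸ hf).scomp t hinner

theorem HasDerivAt.travelingWave_space (hξ : (x - s * t) / τ = ξ) (hf : HasDerivAt f f' ξ) :
    HasDerivAt (fun x' => f ((x' - s * t) / τ)) (τ⁻¹ * f') x := by
  have hinner : HasDerivAt (fun x' : ℝ => (x' - s * t) / τ) τ⁻¹ x := by
    simpa using ((hasDerivAt_id x).sub_const (s * t)).div_const τ
  exact (hξ ▸ hf).scomp x hinner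

end TravelingWave

theorem travelingWave_mass_profile {s τ : ℝ} (hτ : τ ≠ 0) {R U : ℝ → ℝ}
    (hR : Differentiable ℝ R) (hU : Differentiable ℝ U)
    (hmass : ∀ x t : ℝ,
      deriv (fun t' : ℝ => R ((x - s * t') / τ)) t
        + deriv (fun x' : ℝ => R ((x' - s * t) / τ) * U ((x' - s * t) / τ)) x = 0)
    (η : ℝ) :
    (U η - s) * deriv R η + R η * deriv U η = 0 := by
  have hη : (τ * η - s * 0) / τ = η := by rw [mul_zero, sub_zero, mul_div_cancel_left₀ η hτ]
  have hflux : HasDerivAt (fun x' => R ((x' - s * 0) / τ) * U ((x' - s * 0) / τ)) _ (τ * η) :=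
    ((hR η).hasDerivAt.travelingWave_space hη).mul ((hU η).hasDerivAt.travelingWave_space hη)
  have h := hmass (τ * η) 0
  rw [((hR η).hasDerivAt.travelingWave_time hη).deriv, hflux.deriv, hη] at h
  field_simp at h
  linear_combination h

theorem travelingWave_momentum_profile {s τ : ℝ} (hτ : τ ≠ 0) {R U P Ut : ℝ → ℝ}
    (hR : Differentiable ℝ R) (hU : Differentiable ℝ U) (hP : Differentiable ℝ P)
    (hmom : ∀ x t : ℝ,
      deriv (fun t' : ℝ => U ((x - s * t') / τ)) t
        + U ((x - s * t) / τ) * deriv (fun x' : ℝ => U ((x' - s * t) / τ)) x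
        + deriv (fun x' : ℝ => P (R ((x' - s * t) / τ))) x / R ((x - s * t) / τ)
      = (Ut (R ((x - s * t) / τ)) - U ((x - s * t) / τ)) / τ)
    (η : ℝ) :
    (U η - s) * deriv U η + deriv P (R η) * deriv R η / R η = Ut (R η) - U η := by
  have hη : (τ * η - s * 0) / τ = η := by rw [mul_zero, sub_zero, mul_div_cancel_left₀ η hτ]
  have hpressure : HasDerivAt (fun x' => P (R ((x' - s * 0) / τ))) _ (τ * η) :=
    (hP _).hasDerivAt.comp (τ * η) ((hR η).hasDerivAt.travelingWave_space hη)
  have h := hmom (τ * η) 0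
  rw [((hU η).hasDerivAt.travelingWave_time hη).deriv,
    ((hU η).hasDerivAt.travelingWave_space hη).deriv, hpressure.deriv, hη] at h
  field_simp at h
  linear_combination h

theorem travelingWave_ode_of_profile_eqs {K : Type*} [Field K] {r r' u u' c2 ũ s : K}
    (hmass : (u - s) * r' + r * u' = 0) (hmom : (u - s) * u' + c2 * r' / r = ũ - u)
    (hr : r ≠ 0) (hc : (u - s) ^ 2 ≠ c2) :
    u' = (u - s) * (ũ - u) / ((u - s) ^ 2 - c2) := by
  rw [eq_div_iff (sub_ne_zero.mpr hc)]
  field_simp at hmom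
  refine mul_right_cancel₀ hr ?_
  linear_combination (u - s) * hmom - c2 * hmass

/-- If the traveling-wave ansatz ρ(x,t) = R((x − st)/τ),
u(x,t) = U((x − st)/τ), p = P(ρ) satisfies both the mass and momentum equations,
then wherever (U − s)² ≠ c² = P'(R) and U ≠ s, the traveling-wave ODE
U' = (U − s)(Ut(R) − U)/((U − s)² − c²) holds. -/
theorem jamiton_traveling_wave_ode
    (s τ : ℝ) (hτ : 0 < τ) (R U : ℝ → ℝ)
    (hR : Differentiable ℝ R) (hU : Differentiable ℝ U)
    (hRpos : ∀ η : ℝ, 0 < R η)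
    (P : ℝ → ℝ) (hP : Differentiable ℝ P) (Ut : ℝ → ℝ)
    (hmass : ∀ x t : ℝ,
      deriv (fun t' : ℝ => R ((x - s * t') / τ)) t
        + deriv (fun x' : ℝ => R ((x' - s * t) / τ) * U ((x' - s * t) / τ)) x = 0)
    (hmom : ∀ x t : ℝ,
      deriv (fun t' : ℝ => U ((x - s * t') / τ)) t
        + U ((x - s * t) / τ) * deriv (fun x' : ℝ => U ((x' - s * t) / τ)) x
        + deriv (fun x' : ℝ => P (R ((x' - s * t) / τ))) x / R ((x - s * t) / τ)
      = (Ut (R ((x - s * t) / τ)) - U ((x - s * t) / τ)) / τ) :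
    ∀ η : ℝ, (U η - s) ^ 2 ≠ deriv P (R η) → U η ≠ s →
      deriv U η
        = (U η - s) * (Ut (R η) - U η) / ((U η - s) ^ 2 - deriv P (R η)) := by
  intro η hc _
  exact travelingWave_ode_of_profile_eqs (travelingWave_mass_profile hτ.ne' hR hU hmass η)
    (travelingWave_momentum_profile hτ.ne' hR hU hP hmom η) (hRpos η).ne' hc
end

section
/- Let s ∈ ℝ, τ > 0, and let R, U : ℝ → ℝ be differentiable with R(η) > 0 and U(η) ≠ s for all η. Let P : ℝ → ℝ be differentiable and Ũ : ℝ → ℝ be any function. Suppose ρ(x,t) = R((x − st)/τ) and u(x,t) = U((x − st)/τ) satisfy ρ_t + (ρu)_x = 0 and u_t + u u_x + (P(ρ))_x/ρ = (Ũ(ρ) − u)/τ for all (x,t). Then at every η with (U(η) − s)² ≠ P'(R(η)), the density satisfies the ODE R'(η) = R(η)(U(η) − Ũ(R(η))) / ((U(η) − s)² − P'(R(η))). -/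
/-! Along a traveling wave `f ((x - s t) / τ)` every time derivative is `-s / τ` times the profile
derivative and every space derivative is `1 / τ` times it. Evaluated at a point `(x, t)` lying over `η`,
mass conservation becomes `R' (U - s) + R U' = 0` and the momentum equation becomes
`(U - s) U' R + P'(R) R' = (Ũ(R) - U) R`. Eliminating `U'` (subtract the second from `U - s` times the
first) leaves `R' ((U - s)² - P'(R)) = R (U - Ũ(R))`. -/

section TravelingWave

variable {f : ℝ → ℝ} {s τ x t : ℝ}

theorem deriv_travelingWave_time (hf : DifferentiableAt ℝ f ((x - s * t) / τ)) :
    deriv (fun t' : ℝ => f ((x - s * t') / τ)) t = -s / τ * deriv f ((x - s * t) / τ) := by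
  have hinner : HasDerivAt (fun t' : ℝ => (x - s * t') / τ) (-s / τ) t := by
    simpa using ((hasDerivAt_const t x).sub ((hasDerivAt_id t).const_mul s)).div_const τ
  exact (hf.hasDerivAt.comp t hinner).deriv.trans (mul_comm _ _)

theorem deriv_travelingWave_space (hf : DifferentiableAt ℝ f ((x - s * t) / τ)) :
    deriv (fun x' : ℝ => f ((x' - s * t) / τ)) x = deriv f ((x - s * t) / τ) / τ := by
  have hinner : HasDerivAt (fun x' : ℝ => (x' - s * t) / τ) (1 / τ) x := by
    simpa using ((hasDerivAt_id x).sub_const (s * t)).div_const τ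
  exact (hf.hasDerivAt.comp x hinner).deriv.trans (mul_one_div _ _)

end TravelingWave

section Jamiton

variable {s τ x t η : ℝ} {R U P Ut : ℝ → ℝ}

theorem mass_profile_ode (hτ : τ ≠ 0) (hη : (x - s * t) / τ = η)
    (hR : DifferentiableAt ℝ R η) (hU : DifferentiableAt ℝ U η)
    (hmass : deriv (fun t' : ℝ => R ((x - s * t') / τ)) t
        + deriv (fun x' : ℝ => R ((x' - s * t) / τ) * U ((x' - s * t) / τ)) x = 0) :
    deriv R η * (U η - s) + R η * deriv U η = 0 := by
  subst hη
  rw [deriv_travelingWave_time hR, deriv_travelingWave_space (f := fun y => R y * U y) (hR.mul hU),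
    deriv_fun_mul hR hU] at hmass
  field_simp at hmass
  linear_combination hmass

theorem momentum_profile_ode (hτ : τ ≠ 0) (hη : (x - s * t) / τ = η)
    (hR : DifferentiableAt ℝ R η) (hU : DifferentiableAt ℝ U η)
    (hP : DifferentiableAt ℝ P (R η)) (hRη : R η ≠ 0)
    (hmom : deriv (fun t' : ℝ => U ((x - s * t') / τ)) t
        + U ((x - s * t) / τ) * deriv (fun x' : ℝ => U ((x' - s * t) / τ)) x
        + deriv (fun x' : ℝ => P (R ((x' - s * t) / τ))) x / R ((x - s * t) / τ)
      = (Ut (R ((x - s * t) / τ)) - U ((x - s * t) / τ)) / τ) :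
    (U η - s) * deriv U η * R η + deriv P (R η) * deriv R η = (Ut (R η) - U η) * R η := by
  have hPR : deriv (fun y => P (R y)) η = deriv P (R η) * deriv R η := deriv_comp _ hP hR
  subst hη
  rw [deriv_travelingWave_time hU, deriv_travelingWave_space hU,
    deriv_travelingWave_space (f := fun y => P (R y)) (hP.comp _ hR), hPR] at hmom
  field_simp at hmom
  linear_combination hmom

end Jamiton

theorem jamiton_density_ode_general
    (s τ : ℝ) (hτ : 0 < τ) (R U : ℝ → ℝ)
    (hR : Differentiable ℝ R) (hU : Differentiable ℝ U)
    (hRpos : ∀ η : ℝ, 0 < R η)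
    (P : ℝ → ℝ) (hP : Differentiable ℝ P) (Ut : ℝ → ℝ)
    (hmass : ∀ x t : ℝ,
      deriv (fun t' : ℝ => R ((x - s * t') / τ)) t
        + deriv (fun x' : ℝ => R ((x' - s * t) / τ) * U ((x' - s * t) / τ)) x = 0)
    (hmom : ∀ x t : ℝ,
      deriv (fun t' : ℝ => U ((x - s * t') / τ)) t
        + U ((x - s * t) / τ) * deriv (fun x' : ℝ => U ((x' - s * t) / τ)) x
        + deriv (fun x' : ℝ => P (R ((x' - s * t) / τ))) x / R ((x - s * t) / τ)
      = (Ut (R ((x - s * t) / τ)) - U ((x - s * t) / τ)) / τ) :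
    ∀ η : ℝ, (U η - s) ^ 2 ≠ deriv P (R η) →
      deriv R η
        = R η * (U η - Ut (R η)) / ((U η - s) ^ 2 - deriv P (R η)) := by
  intro η hne
  have hη : (τ * η - s * 0) / τ = η := by rw [mul_zero, sub_zero, mul_div_cancel_left₀ η hτ.ne']
  have mass := mass_profile_ode hτ.ne' hη (hR η) (hU η) (hmass (τ * η) 0)
  have momentum := momentum_profile_ode hτ.ne' hη (hR η) (hU η) (hP (R η)) (hRpos η).ne'
    (hmom (τ * η) 0)
  rw [eq_div_iff (sub_ne_zero.mpr hne)]
  linear_combination (U η - s) * mass - momentum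

/-- Under the traveling-wave ansatz satisfying both PDEs of the
traffic model, the density profile satisfies the ODE
R' = R(U − Ũ(R))/((U − s)² − P'(R)) wherever (U − s)² ≠ P'(R). -/
theorem jamiton_density_ode
    (s τ : ℝ) (hτ : 0 < τ) (R U : ℝ → ℝ)
    (hR : Differentiable ℝ R) (hU : Differentiable ℝ U)
    (hRpos : ∀ η : ℝ, 0 < R η) (hUs : ∀ η : ℝ, U η ≠ s)
    (P : ℝ → ℝ) (hP : Differentiable ℝ P) (Ut : ℝ → ℝ)
    (hmass : ∀ x t : ℝ,
      deriv (fun t' : ℝ => R ((x - s * t') / τ)) t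
        + deriv (fun x' : ℝ => R ((x' - s * t) / τ) * U ((x' - s * t) / τ)) x = 0)
    (hmom : ∀ x t : ℝ,
      deriv (fun t' : ℝ => U ((x - s * t') / τ)) t
        + U ((x - s * t) / τ) * deriv (fun x' : ℝ => U ((x' - s * t) / τ)) x
        + deriv (fun x' : ℝ => P (R ((x' - s * t) / τ))) x / R ((x - s * t) / τ)
      = (Ut (R ((x - s * t) / τ)) - U ((x - s * t) / τ)) / τ) :
    ∀ η : ℝ, (U η - s) ^ 2 ≠ deriv P (R η) →
      deriv R η
        = R η * (U η - Ut (R η)) / ((U η - s) ^ 2 - deriv P (R η)) :=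
  jamiton_density_ode_general s τ hτ R U hR hU hRpos P hP Ut hmass hmom
end

section
/- Let s ∈ ℝ, let U, R : ℝ → ℝ with U differentiable and U' continuous at η₀, let R be continuous at η₀, let P : ℝ → ℝ be differentiable with P' continuous, and let Ũ : ℝ → ℝ be continuous. Suppose that in a punctured neighborhood of η₀ one has (U(η) − s)² ≠ P'(R(η)) and U'(η) = (U(η) − s)(Ũ(R(η)) − U(η)) / ((U(η) − s)² − P'(R(η))), and suppose η₀ is a sonic point, i.e. (U(η₀) − s)² = P'(R(η₀)). Then (U(η₀) − s)(Ũ(R(η₀)) − U(η₀)) = 0; in particular, if U(η₀) ≠ s, then the desired speed matches the actual speed at the sonic point: Ũ(R(η₀)) = U(η₀). -/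
/-!
Clearing the denominator, `U' · ((U - s)² - P'(R)) = (U - s)(Ũ(R) - U)` holds in a punctured
neighborhood of `η₀`. Both sides are continuous at `η₀`, so the identity persists at `η₀`, where
the sonic condition makes the left side vanish.
-/

open Filter Topology

theorem eq_zero_of_eventually_mul_eq_of_continuousAt {X M : Type*} [TopologicalSpace X]
    [MulZeroClass M] [TopologicalSpace M] [ContinuousMul M] [T2Space M]
    {x : X} [(𝓝[≠] x).NeBot] {F D N : X → M}
    (hF : ContinuousAt F x) (hD : ContinuousAt D x) (hN : ContinuousAt N x) (hDx : D x = 0)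
    (h : ∀ᶠ y in 𝓝[≠] x, F y * D y = N y) :
    N x = 0 := by
  have hx : F x * D x = N x :=
    ((hF.mul hD).eventuallyEq_nhds_iff_eventuallyEq_nhdsNE hN).1 h |>.eq_of_nhds
  rw [← hx, hDx, mul_zero]

theorem numerator_eq_zero_of_eventually_eq_div {X G₀ : Type*} [TopologicalSpace X]
    [GroupWithZero G₀] [TopologicalSpace G₀] [ContinuousMul G₀] [T2Space G₀]
    {x : X} [(𝓝[≠] x).NeBot] {F D N : X → G₀}
    (hF : ContinuousAt F x) (hD : ContinuousAt D x) (hN : ContinuousAt N x) (hDx : D x = 0)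
    (h : ∀ᶠ y in 𝓝[≠] x, D y ≠ 0 ∧ F y = N y / D y) :
    N x = 0 :=
  eq_zero_of_eventually_mul_eq_of_continuousAt hF hD hN hDx <|
    h.mono fun _ ⟨hDy, hFy⟩ => (eq_div_iff hDy).1 hFy

theorem sonic_point_chapman_jouguet_general
    (s η₀ : ℝ) (U R : ℝ → ℝ)
    (hU : Differentiable ℝ U) (hU' : ContinuousAt (deriv U) η₀)
    (hRcont : ContinuousAt R η₀)
    (P : ℝ → ℝ) (hP' : Continuous (deriv P))
    (Ut : ℝ → ℝ) (hUt : Continuous Ut)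
    (hode : ∀ᶠ η in 𝓝[≠] η₀,
      (U η - s) ^ 2 ≠ deriv P (R η) ∧
      deriv U η
        = (U η - s) * (Ut (R η) - U η) / ((U η - s) ^ 2 - deriv P (R η)))
    (hsonic : (U η₀ - s) ^ 2 = deriv P (R η₀)) :
    (U η₀ - s) * (Ut (R η₀) - U η₀) = 0 ∧
      (U η₀ ≠ s → Ut (R η₀) = U η₀) := by
  have hUcont : ContinuousAt U η₀ := (hU η₀).continuousAt
  have hnum : (U η₀ - s) * (Ut (R η₀) - U η₀) = 0 :=
    numerator_eq_zero_of_eventually_eq_div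
      (D := fun η => (U η - s) ^ 2 - deriv P (R η)) (N := fun η => (U η - s) * (Ut (R η) - U η))
      hU'
      (((hUcont.sub continuousAt_const).pow 2).sub (hP'.continuousAt.comp hRcont))
      ((hUcont.sub continuousAt_const).mul ((hUt.continuousAt.comp hRcont).sub hUcont))
      (sub_eq_zero.2 hsonic)
      (hode.mono fun _ ⟨hne, hη⟩ => ⟨sub_ne_zero.2 hne, hη⟩)
  exact ⟨hnum, fun hne =>
    sub_eq_zero.1 <| (mul_eq_zero.1 hnum).resolve_left (sub_ne_zero.2 hne)⟩

/-- Chapman–Jouguet / sonic-point condition: If the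
traveling-wave ODE holds in a punctured neighborhood of a sonic point η₀
(where (U − s)² = P'(R)), and U', R, P', Ũ are suitably continuous, then the
numerator of the ODE must also vanish at η₀:
(U(η₀) − s)(Ũ(R(η₀)) − U(η₀)) = 0; in particular, if U(η₀) ≠ s, then
Ũ(R(η₀)) = U(η₀). -/
theorem sonic_point_chapman_jouguet
    (s η₀ : ℝ) (U R : ℝ → ℝ)
    (hU : Differentiable ℝ U) (hU' : ContinuousAt (deriv U) η₀)
    (hRcont : ContinuousAt R η₀)
    (P : ℝ → ℝ) (hP : Differentiable ℝ P) (hP' : Continuous (deriv P))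
    (Ut : ℝ → ℝ) (hUt : Continuous Ut)
    (hode : ∀ᶠ η in 𝓝[≠] η₀,
      (U η - s) ^ 2 ≠ deriv P (R η) ∧
      deriv U η
        = (U η - s) * (Ut (R η) - U η) / ((U η - s) ^ 2 - deriv P (R η)))
    (hsonic : (U η₀ - s) ^ 2 = deriv P (R η₀)) :
    (U η₀ - s) * (Ut (R η₀) - U η₀) = 0 ∧
      (U η₀ ≠ s → Ut (R η₀) = U η₀) :=
  sonic_point_chapman_jouguet_general s η₀ U R hU hU' hRcont P hP' Ut hUt hode hsonic
end
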